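/- arXiv:2103.07287 — 2 statements merged into one kernel-verified Lean document; each statement's English description precedes it below -/
import Mathlib

section
/- Suppose W̃ ∈ ℂ^{k×d}, v ∈ ℂ^k, and set M̃ = W̃ᵀ diag(v) W̃. If Σ_{i=1}^n (x_iᵀ M̃ x_i − y_i)* x_i x_iᵀ = 0 (the zero d×d matrix), then for every W ∈ ℂ^{k×d}, (1/(2n)) Σ_i ‖x_iᵀ Wᵀ diag(v) W x_i − y_i‖² ≥ (1/(2n)) Σ_i ‖x_iᵀ M̃ x_i − y_i‖². That is, W̃ is a global minimizer of the quadratic-network loss. -/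
/-!
The loss depends on `W` only through `M = Wᵀ diag(v) W`, and the residual `x ⬝ᵥ M x - y` is affine
in `M`. Since `x ⬝ᵥ A x = tr (A x xᵀ)`, the hypothesis says that the residual vector `r` of `M₀` is
orthogonal in `ℂⁿ` to `i ↦ x i ⬝ᵥ A x i` for every matrix `A`. The residual of any `M` is
`(x ⬝ᵥ (M - M₀) x) + r`, so by Pythagoras its squared norm is at least `‖r‖²`.
-/

open Matrix

theorem dotProduct_mulVec_self_eq_trace {ι R : Type*} [Fintype ι] [CommSemiring R]
    (A : Matrix ι ι R) (x : ι → R) : x ⬝ᵥ A *ᵥ x = trace (A * vecMulVec x x) := by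
  rw [mul_vecMulVec, trace_vecMulVec, dotProduct_comm]

theorem sum_smul_dotProduct_mulVec_self_eq_zero {ι κ R : Type*} [Fintype ι] [Fintype κ]
    [CommSemiring R] {x : κ → ι → R} {c : κ → R}
    (h : ∑ i, c i • vecMulVec (x i) (x i) = 0) (A : Matrix ι ι R) :
    ∑ i, c i * (x i ⬝ᵥ A *ᵥ x i) = 0 := by
  calc ∑ i, c i * (x i ⬝ᵥ A *ᵥ x i)
      = trace (A * ∑ i, c i • vecMulVec (x i) (x i)) := by
        simp only [dotProduct_mulVec_self_eq_trace, Matrix.mul_sum, mul_smul_comm, trace_sum,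
          trace_smul, smul_eq_mul]
    _ = 0 := by rw [h, Matrix.mul_zero, trace_zero]

theorem Complex.sum_normSq_add_of_sum_mul_conj_eq_zero {κ : Type*} [Fintype κ] {a r : κ → ℂ}
    (h : ∑ i, a i * starRingEnd ℂ (r i) = 0) :
    ∑ i, normSq (a i + r i) = ∑ i, normSq (a i) + ∑ i, normSq (r i) := by
  simp_rw [normSq_add, Finset.sum_add_distrib, ← Finset.mul_sum, ← re_sum, h, zero_re, mul_zero,
    add_zero]

theorem sum_norm_sq_residual_le_of_stationary {ι κ : Type*} [Fintype ι] [Fintype κ]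
    (x : κ → ι → ℂ) (y : κ → ℂ) {M₀ : Matrix ι ι ℂ}
    (hopt : ∑ i, starRingEnd ℂ (x i ⬝ᵥ M₀ *ᵥ x i - y i) • vecMulVec (x i) (x i) = 0)
    (M : Matrix ι ι ℂ) :
    ∑ i, ‖x i ⬝ᵥ M₀ *ᵥ x i - y i‖ ^ 2 ≤ ∑ i, ‖x i ⬝ᵥ M *ᵥ x i - y i‖ ^ 2 := by
  set r := fun i => x i ⬝ᵥ M₀ *ᵥ x i - y i
  set a := fun i => x i ⬝ᵥ (M - M₀) *ᵥ x i
  have hsplit : ∀ i, x i ⬝ᵥ M *ᵥ x i - y i = a i + r i := fun i => by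
    simp only [a, r, sub_mulVec, dotProduct_sub]
    ring
  have horth : ∑ i, a i * starRingEnd ℂ (r i) = 0 := by
    rw [← sum_smul_dotProduct_mulVec_self_eq_zero hopt (M - M₀)]
    exact Finset.sum_congr rfl fun i _ => mul_comm _ _
  simp_rw [hsplit, Complex.sq_norm, Complex.sum_normSq_add_of_sum_mul_conj_eq_zero horth]
  exact le_add_of_nonneg_left (Finset.sum_nonneg fun i _ => Complex.normSq_nonneg _)

theorem stmt_5_general {n k d : ℕ} (x : Fin n → Fin d → ℂ) (y : Fin n → ℂ)
    (v : Fin k → ℂ)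
    (M₀ : Matrix (Fin d) (Fin d) ℂ)
    (hopt : ∑ i, (starRingEnd ℂ (x i ⬝ᵥ M₀.mulVec (x i) - y i)) •
        Matrix.vecMulVec (x i) (x i) = 0) :
    ∀ W : Matrix (Fin k) (Fin d) ℂ,
      (1 / (2 * (n : ℝ))) * ∑ i,
          ‖x i ⬝ᵥ (Wᵀ * Matrix.diagonal v * W).mulVec (x i) - y i‖ ^ 2 ≥
      (1 / (2 * (n : ℝ))) * ∑ i, ‖x i ⬝ᵥ M₀.mulVec (x i) - y i‖ ^ 2 := fun W =>
  mul_le_mul_of_nonneg_left (sum_norm_sq_residual_le_of_stationary x y hopt _) (by positivity)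

theorem stmt_5 {n k d : ℕ} (x : Fin n → Fin d → ℂ) (y : Fin n → ℂ)
    (v : Fin k → ℂ) (W₀ : Matrix (Fin k) (Fin d) ℂ)
    (M₀ : Matrix (Fin d) (Fin d) ℂ) (hM₀ : M₀ = W₀ᵀ * Matrix.diagonal v * W₀)
    (hopt : ∑ i, (starRingEnd ℂ (x i ⬝ᵥ M₀.mulVec (x i) - y i)) •
        Matrix.vecMulVec (x i) (x i) = 0) :
    ∀ W : Matrix (Fin k) (Fin d) ℂ,
      (1 / (2 * (n : ℝ))) * ∑ i,
          ‖x i ⬝ᵥ (Wᵀ * Matrix.diagonal v * W).mulVec (x i) - y i‖ ^ 2 ≥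
      (1 / (2 * (n : ℝ))) * ∑ i, ‖x i ⬝ᵥ M₀.mulVec (x i) - y i‖ ^ 2 :=
  stmt_5_general x y v M₀ hopt
end

section
/- The 8×8 real symmetric block matrix H^ℂ = [[H₁,H₁,H₂,H₃],[H₁,H₁,H₃,H₂],[H₂,H₃,H₁,H₁],[H₃,H₂,H₁,H₁]], where H₁ = [[5/216, 1/216],[1/216, 5/216]], H₂ = [[1/108, −1/108],[−1/108, 1/108]], H₃ = 0₂ₓ₂, has both a strictly positive and a strictly negative eigenvalue. -/
open Matrix

theorem stmt_10
    (H₁ H₂ H₃ : Matrix (Fin 2) (Fin 2) ℝ)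
    (hH₁ : H₁ = !![5/216, 1/216; 1/216, 5/216])
    (hH₂ : H₂ = !![1/108, -1/108; -1/108, 1/108])
    (hH₃ : H₃ = 0)
    (H : Matrix (Fin 4 × Fin 2) (Fin 4 × Fin 2) ℝ)
    (hH : H = fun p q =>
      (![![H₁, H₁, H₂, H₃], ![H₁, H₁, H₃, H₂],
         ![H₂, H₃, H₁, H₁], ![H₃, H₂, H₁, H₁]] p.1 q.1) p.2 q.2) :
    (∃ c : ℝ, 0 < c ∧ ∃ u : Fin 4 × Fin 2 → ℝ, u ≠ 0 ∧ H.mulVec u = c • u) ∧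
    (∃ c : ℝ, c < 0 ∧ ∃ u : Fin 4 × Fin 2 → ℝ, u ≠ 0 ∧ H.mulVec u = c • u) := by
  subst hH₁ hH₂ hH₃ hH
  constructor
  · refine ⟨1/18, by norm_num, fun _ => 1, ?_, ?_⟩
    · intro h
      have := congrFun h (0, 0)
      simp at this
    · ext ⟨i, j⟩
      fin_cases i <;> fin_cases j <;>
        simp [Matrix.mulVec, dotProduct, Fintype.sum_prod_type,
          Fin.sum_univ_succ] <;> norm_num
  · refine ⟨-1/54, by norm_num,
      fun p => (![1, -1, -1, 1] p.1) * (![1, -1] p.2), ?_, ?_⟩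
    · intro h
      have := congrFun h (0, 0)
      simp at this
    · ext ⟨i, j⟩
      fin_cases i <;> fin_cases j <;>
        simp [Matrix.mulVec, dotProduct, Fintype.sum_prod_type,
          Fin.sum_univ_succ] <;> norm_num
end
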